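/- arXiv:2507.05438 — 8 statements merged into one kernel-verified Lean document; each statement's English description precedes it below -/
import Mathlib

section
/- Let B be a Boolean algebra, let C = (a,g) and C' = (a',g') be assume-guarantee contracts over B, and let their composition be C ∥ C' = (a_c, g_c) with a_c = (a ⊓ a') ⊔ (a ⊓ gᶜ) ⊔ (a' ⊓ g'ᶜ) and g_c = (g ⊔ aᶜ) ⊓ (g' ⊔ a'ᶜ). If m is an implementation of C (m ≤ aᶜ ⊔ g) and m' is an implementation of C' (m' ≤ a'ᶜ ⊔ g'), then m ⊓ m' is an implementation of C ∥ C', i.e., m ⊓ m' ≤ a_cᶜ ⊔ g_c. -/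
theorem stmt_4 {B : Type*} [BooleanAlgebra B] (a g a' g' m m' : B)
    (hm : m ≤ aᶜ ⊔ g) (hm' : m' ≤ a'ᶜ ⊔ g') :
    m ⊓ m' ≤ ((a ⊓ a') ⊔ (a ⊓ gᶜ) ⊔ (a' ⊓ g'ᶜ))ᶜ ⊔ ((g ⊔ aᶜ) ⊓ (g' ⊔ a'ᶜ)) := by
  refine le_sup_of_le_right (inf_le_inf ?_ ?_)
  · simpa [sup_comm] using hm
  · simpa [sup_comm] using hm'
end

section
/- Let B be a Boolean algebra, let C = (a,g) and C' = (a',g') be assume-guarantee contracts over B, and let a_c = (a ⊓ a') ⊔ (a ⊓ gᶜ) ⊔ (a' ⊓ g'ᶜ) be the assumption of their composition. If e ≤ a_c and m' is an implementation of C' (m' ≤ a'ᶜ ⊔ g'), then e ⊓ m' ≤ a; symmetrically, if m is an implementation of C (m ≤ aᶜ ⊔ g), then e ⊓ m ≤ a'. -/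
private lemma aux_bot {B : Type*} [BooleanAlgebra B] (z w : B) :
    (z ⊓ wᶜ) ⊓ (zᶜ ⊔ w) = ⊥ := by
  rw [inf_sup_left, inf_right_comm, inf_compl_self, bot_inf_eq, inf_assoc,
    compl_inf_self, inf_bot_eq, sup_bot_eq]

theorem stmt_5 {B : Type*} [BooleanAlgebra B] (a g a' g' e : B)
    (he : e ≤ (a ⊓ a') ⊔ (a ⊓ gᶜ) ⊔ (a' ⊓ g'ᶜ)) :
    (∀ m' : B, m' ≤ a'ᶜ ⊔ g' → e ⊓ m' ≤ a) ∧
      (∀ m : B, m ≤ aᶜ ⊔ g → e ⊓ m ≤ a') := by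
  constructor <;> intro m hm <;> refine le_trans (inf_le_inf he hm) ?_ <;>
    rw [inf_sup_right, inf_sup_right]
  · exact sup_le (sup_le (inf_le_left.trans inf_le_left)
      (inf_le_left.trans inf_le_left)) ((aux_bot a' g').le.trans bot_le)
  · exact sup_le (sup_le (inf_le_left.trans inf_le_right)
      ((aux_bot a g).le.trans bot_le)) (inf_le_left.trans inf_le_left)
end

section
/- Let B be a Boolean algebra and let C = (a,g), C' = (a',g') be assume-guarantee contracts over B. The composition C ∥ C' = (a_c, g_c), with a_c = (a ⊓ a') ⊔ (a ⊓ gᶜ) ⊔ (a' ⊓ g'ᶜ) and g_c = (g ⊔ aᶜ) ⊓ (g' ⊔ a'ᶜ), is the most refined contract satisfied by the composed system: for any contract (b, h) over B such that (i) for all m ≤ aᶜ ⊔ g and m' ≤ a'ᶜ ⊔ g' one has m ⊓ m' ≤ bᶜ ⊔ h, (ii) for all e ≤ b and m' ≤ a'ᶜ ⊔ g' one has e ⊓ m' ≤ a, and (iii) for all e ≤ b and m ≤ aᶜ ⊔ g one has e ⊓ m ≤ a', the refinement C ∥ C' ≤ (b, h) holds. -/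
/-- Refinement of assume-guarantee contracts over a Boolean algebra. -/
def agRefines {B : Type*} [BooleanAlgebra B] (C₁ C₂ : B × B) : Prop :=
  C₂.1 ≤ C₁.1 ∧ C₁.1ᶜ ⊔ C₁.2 ≤ C₂.1ᶜ ⊔ C₂.2

theorem stmt_6 {B : Type*} [BooleanAlgebra B] (a g a' g' b h : B)
    (h₁ : ∀ m m' : B, m ≤ aᶜ ⊔ g → m' ≤ a'ᶜ ⊔ g' → m ⊓ m' ≤ bᶜ ⊔ h)
    (h₂ : ∀ e m' : B, e ≤ b → m' ≤ a'ᶜ ⊔ g' → e ⊓ m' ≤ a)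
    (h₃ : ∀ e m : B, e ≤ b → m ≤ aᶜ ⊔ g → e ⊓ m ≤ a') :
    agRefines ((a ⊓ a') ⊔ (a ⊓ gᶜ) ⊔ (a' ⊓ g'ᶜ), (g ⊔ aᶜ) ⊓ (g' ⊔ a'ᶜ)) (b, h) := by
  set ac := (a ⊓ a') ⊔ (a ⊓ gᶜ) ⊔ (a' ⊓ g'ᶜ) with hac
  -- a_cᶜ ≤ aᶜ ⊔ g
  have hA : acᶜ ≤ aᶜ ⊔ g := by
    have : a ⊓ gᶜ ≤ ac := le_sup_of_le_left le_sup_right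
    calc acᶜ ≤ (a ⊓ gᶜ)ᶜ := compl_le_compl this
      _ = aᶜ ⊔ g := by rw [compl_inf, compl_compl]
  have hA' : acᶜ ≤ a'ᶜ ⊔ g' := by
    have : a' ⊓ g'ᶜ ≤ ac := le_sup_right
    calc acᶜ ≤ (a' ⊓ g'ᶜ)ᶜ := compl_le_compl this
      _ = a'ᶜ ⊔ g' := by rw [compl_inf, compl_compl]
  have hAA' : acᶜ ≤ (a ⊓ a')ᶜ :=
    compl_le_compl (le_sup_of_le_left le_sup_left)
  constructor
  · -- b ≤ ac
    show b ≤ ac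
    have hx1 : b ⊓ acᶜ ≤ a := h₂ b acᶜ le_rfl hA'
    have hx2 : b ⊓ acᶜ ≤ a' := h₃ b acᶜ le_rfl hA
    have hx3 : b ⊓ acᶜ ≤ (a ⊓ a')ᶜ := le_trans inf_le_right hAA'
    have hbot : b ⊓ acᶜ ≤ ⊥ := by
      calc b ⊓ acᶜ ≤ (a ⊓ a') ⊓ (a ⊓ a')ᶜ := le_inf (le_inf hx1 hx2) hx3
        _ = ⊥ := inf_compl_eq_bot
    rwa [← sdiff_eq_bot_iff, sdiff_eq, ← le_bot_iff]
  · -- acᶜ ⊔ gc ≤ bᶜ ⊔ h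
    show acᶜ ⊔ ((g ⊔ aᶜ) ⊓ (g' ⊔ a'ᶜ)) ≤ bᶜ ⊔ h
    have key : (aᶜ ⊔ g) ⊓ (a'ᶜ ⊔ g') ≤ bᶜ ⊔ h := h₁ _ _ le_rfl le_rfl
    apply sup_le
    · exact le_trans (le_inf hA hA') key
    · calc (g ⊔ aᶜ) ⊓ (g' ⊔ a'ᶜ) = (aᶜ ⊔ g) ⊓ (a'ᶜ ⊔ g') := by rw [sup_comm g, sup_comm g']
        _ ≤ bᶜ ⊔ h := key
end

section
/- Let B be a Boolean algebra. Contract composition is associative up to contract equivalence: for all assume-guarantee contracts C₁, C₂, C₃ over B, the contracts (C₁ ∥ C₂) ∥ C₃ and C₁ ∥ (C₂ ∥ C₃) are equivalent, i.e., each refines the other. -/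
/-- Composition of assume-guarantee contracts over a Boolean algebra. -/
def agComp {B : Type*} [BooleanAlgebra B] (C C' : B × B) : B × B :=
  ((C.1 ⊓ C'.1) ⊔ (C.1 ⊓ C.2ᶜ) ⊔ (C'.1 ⊓ C'.2ᶜ),
   (C.2 ⊔ C.1ᶜ) ⊓ (C'.2 ⊔ C'.1ᶜ))

private lemma agComp_snd_compl {B : Type*} [BooleanAlgebra B] (C C' : B × B) :
    (agComp C C').2ᶜ = (C.1 ⊓ C.2ᶜ) ⊔ (C'.1 ⊓ C'.2ᶜ) := by
  simp [agComp, compl_inf, compl_sup, inf_comm]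

private lemma agComp_fst_eq {B : Type*} [BooleanAlgebra B] (C C' : B × B) :
    (agComp C C').1 = (C.1 ⊓ C'.1) ⊔ ((C.1 ⊓ C.2ᶜ) ⊔ (C'.1 ⊓ C'.2ᶜ)) := by
  simp [agComp, sup_assoc]

private lemma agComp_compl_fst_le {B : Type*} [BooleanAlgebra B] (C C' : B × B) :
    (agComp C C').1ᶜ ≤ (agComp C C').2 := by
  simp only [agComp, compl_sup, compl_inf, compl_compl]
  refine le_inf ?_ ?_
  · exact le_trans inf_le_left (le_trans inf_le_right (by rw [sup_comm]))
  · exact le_trans inf_le_right (by rw [sup_comm])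

private lemma agComp_snd_sup {B : Type*} [BooleanAlgebra B] (C C' : B × B) :
    (agComp C C').2 ⊔ (agComp C C').1ᶜ = (agComp C C').2 :=
  sup_eq_left.mpr (agComp_compl_fst_le C C')

private lemma lat_key {B : Type*} [DistribLattice B] (p a w z : B) :
    ((p ⊔ w) ⊓ a) ⊔ (((p ⊔ w) ⊓ w) ⊔ z) = (p ⊓ a) ⊔ (w ⊔ z) := by
  rw [inf_eq_right.mpr (le_sup_right : w ≤ p ⊔ w), inf_sup_right]
  rw [sup_assoc, ← sup_assoc (w ⊓ a), sup_eq_right.mpr (inf_le_left : w ⊓ a ≤ w)]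

private lemma lat_key' {B : Type*} [DistribLattice B] (a q z v : B) :
    (a ⊓ (q ⊔ v)) ⊔ (z ⊔ ((q ⊔ v) ⊓ v)) = (a ⊓ q) ⊔ (z ⊔ v) := by
  rw [inf_eq_right.mpr (le_sup_right : v ≤ q ⊔ v), inf_sup_left, sup_assoc, sup_comm z v,
    ← sup_assoc (a ⊓ v), sup_eq_right.mpr (inf_le_right : a ⊓ v ≤ v), sup_comm v z]

private lemma agComp_assoc {B : Type*} [BooleanAlgebra B] (C₁ C₂ C₃ : B × B) :
    agComp (agComp C₁ C₂) C₃ = agComp C₁ (agComp C₂ C₃) := by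
  have hfst : (agComp (agComp C₁ C₂) C₃).1 = (agComp C₁ (agComp C₂ C₃)).1 := by
    rw [agComp_fst_eq (agComp C₁ C₂) C₃, agComp_snd_compl, agComp_fst_eq C₁ C₂,
      agComp_fst_eq C₁ (agComp C₂ C₃), agComp_snd_compl, agComp_fst_eq C₂ C₃,
      lat_key, lat_key', inf_assoc, sup_assoc]
  have hsnd : (agComp (agComp C₁ C₂) C₃).2 = (agComp C₁ (agComp C₂ C₃)).2 := by
    show ((agComp C₁ C₂).2 ⊔ (agComp C₁ C₂).1ᶜ) ⊓ (C₃.2 ⊔ C₃.1ᶜ)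
        = (C₁.2 ⊔ C₁.1ᶜ) ⊓ ((agComp C₂ C₃).2 ⊔ (agComp C₂ C₃).1ᶜ)
    rw [agComp_snd_sup, agComp_snd_sup]
    show ((C₁.2 ⊔ C₁.1ᶜ) ⊓ (C₂.2 ⊔ C₂.1ᶜ)) ⊓ (C₃.2 ⊔ C₃.1ᶜ)
        = (C₁.2 ⊔ C₁.1ᶜ) ⊓ ((C₂.2 ⊔ C₂.1ᶜ) ⊓ (C₃.2 ⊔ C₃.1ᶜ))
    rw [inf_assoc]
  exact Prod.ext hfst hsnd

theorem stmt_8 {B : Type*} [BooleanAlgebra B] (C₁ C₂ C₃ : B × B) :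
    agRefines (agComp (agComp C₁ C₂) C₃) (agComp C₁ (agComp C₂ C₃)) ∧
      agRefines (agComp C₁ (agComp C₂ C₃)) (agComp (agComp C₁ C₂) C₃) := by
  rw [agComp_assoc]
  exact ⟨⟨le_rfl, le_rfl⟩, ⟨le_rfl, le_rfl⟩⟩
end

section
/- Let B be a Boolean algebra. Contract composition is monotone with respect to refinement: for assume-guarantee contracts C₁, C₁', C₂, C₂' over B, if C₁ ≤ C₁' and C₂ ≤ C₂', then C₁ ∥ C₂ ≤ C₁' ∥ C₂'. -/
theorem stmt_9 {B : Type*} [BooleanAlgebra B] (C₁ C₁' C₂ C₂' : B × B)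
    (h₁ : agRefines C₁ C₁') (h₂ : agRefines C₂ C₂') :
    agRefines (agComp C₁ C₂) (agComp C₁' C₂') := by
  obtain ⟨ha1, hi1⟩ := h₁
  obtain ⟨ha2, hi2⟩ := h₂
  have k1 : C₁'.1 ⊓ C₁'.2ᶜ ≤ C₁.1 ⊓ C₁.2ᶜ := by
    have := compl_le_compl hi1
    simpa [compl_sup] using this
  have k2 : C₂'.1 ⊓ C₂'.2ᶜ ≤ C₂.1 ⊓ C₂.2ᶜ := by
    have := compl_le_compl hi2
    simpa [compl_sup] using this
  have hg : (C₁.2 ⊔ C₁.1ᶜ) ⊓ (C₂.2 ⊔ C₂.1ᶜ) ≤ (C₁'.2 ⊔ C₁'.1ᶜ) ⊓ (C₂'.2 ⊔ C₂'.1ᶜ) := by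
    refine inf_le_inf ?_ ?_
    · rw [sup_comm, sup_comm C₁'.2]; exact hi1
    · rw [sup_comm, sup_comm C₂'.2]; exact hi2
  constructor
  · refine sup_le (sup_le ?_ ?_) ?_
    · exact le_sup_of_le_left (le_sup_of_le_left (inf_le_inf ha1 ha2))
    · exact le_sup_of_le_left (le_sup_of_le_right k1)
    · exact le_sup_of_le_right k2
  · refine sup_le ?_ (le_sup_of_le_right hg)
    refine le_trans ?_ (le_sup_of_le_right hg)
    rw [compl_le_iff_compl_le]
    show ((C₁.2 ⊔ C₁.1ᶜ) ⊓ (C₂.2 ⊔ C₂.1ᶜ))ᶜ ≤ _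
    simp only [compl_inf, compl_sup, compl_compl]
    exact sup_le (le_sup_of_le_left (le_sup_of_le_right (by rw [inf_comm])))
      (le_sup_of_le_right (by rw [inf_comm]))
end

section
/- Let B be a Boolean algebra, let (a,g) and (a',g') be assume-guarantee contracts over B, and let (a_c, g_c) be their composition with a_c = (a ⊓ a') ⊔ (a ⊓ gᶜ) ⊔ (a' ⊓ g'ᶜ) and g_c = (g ⊔ aᶜ) ⊓ (g' ⊔ a'ᶜ). Then the system-level failure region is covered by the component failure regions: a_c ⊓ g_cᶜ ≤ (a ⊓ gᶜ) ⊔ (a' ⊓ g'ᶜ). In particular, any behavior that satisfies the composed assumptions but violates the composed guarantees exhibits a fault of at least one of the two components (that component's assumption holds but its guarantee fails). -/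
theorem stmt_12 {B : Type*} [BooleanAlgebra B] (a g a' g' : B) :
    ((a ⊓ a') ⊔ (a ⊓ gᶜ) ⊔ (a' ⊓ g'ᶜ)) ⊓ ((g ⊔ aᶜ) ⊓ (g' ⊔ a'ᶜ))ᶜ ≤
      (a ⊓ gᶜ) ⊔ (a' ⊓ g'ᶜ) := by
  rw [compl_inf, compl_sup, compl_sup, compl_compl, compl_compl]
  rw [inf_sup_left, inf_sup_right, inf_sup_right, inf_sup_right]
  repeat' apply sup_le
  all_goals first
    | (apply le_sup_of_le_left; refine le_inf ?_ ?_ <;>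
        solve_by_elim [inf_le_of_left_le, inf_le_of_right_le, le_refl])
    | (apply le_sup_of_le_right; refine le_inf ?_ ?_ <;>
        solve_by_elim [inf_le_of_left_le, inf_le_of_right_le, le_refl])
end

section
/- Let B be a Boolean algebra and let C₁ = (a₁,g₁), …, C_N = (a_N,g_N) be assume-guarantee contracts over B composed left-to-right, i.e., (A, G) := (…(C₁ ∥ C₂) ∥ … ) ∥ C_N, where ∥ is contract composition. Then A ⊓ Gᶜ ≤ ⊔_{i=1}^{N} (a_i ⊓ g_iᶜ). Consequently, if a behavior satisfies the system-level assumptions A but violates a system-level guarantee (so it lies below A ⊓ Gᶜ), there exists at least one component i whose assumption a_i is satisfied while its guarantee g_i is violated, i.e., at least one faulty component. -/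
lemma agComp_fail {B : Type*} [BooleanAlgebra B] (C C' : B × B) :
    (agComp C C').1 ⊓ ((agComp C C').2)ᶜ ≤ (C.1 ⊓ C.2ᶜ) ⊔ (C'.1 ⊓ C'.2ᶜ) := by
  refine inf_le_right.trans ?_
  simp [agComp, compl_sup, compl_inf, inf_comm]

/-- The system contract obtained by composing `C₁, C₂, …, C_N` left-to-right is
`Cs.foldl agComp C₁` with `Cs = [C₂, …, C_N]`.  Its failure region `A ⊓ Gᶜ` is
covered by the join of the component failure regions `a_i ⊓ g_iᶜ`. -/
theorem stmt_13 {B : Type*} [BooleanAlgebra B] (C₁ : B × B) (Cs : List (B × B)) :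
    (Cs.foldl agComp C₁).1 ⊓ ((Cs.foldl agComp C₁).2)ᶜ ≤
      ((C₁ :: Cs).map (fun C => C.1 ⊓ C.2ᶜ)).foldr (· ⊔ ·) ⊥ := by
  induction Cs generalizing C₁ with
  | nil => simp
  | cons C' Cs ih =>
    simp only [List.foldl_cons, List.map_cons, List.foldr_cons]
    refine (ih (agComp C₁ C')).trans ?_
    simp only [List.map_cons, List.foldr_cons]
    exact sup_le ((agComp_fail C₁ C').trans (sup_le le_sup_left (le_sup_of_le_right le_sup_left))) (le_sup_of_le_right le_sup_right)
end

section
/- Let B be a Boolean algebra and let (a,g), (a',g') be assume-guarantee contracts over B. If e ≤ a ⊓ a' (an environment in the stem), m ≤ aᶜ ⊔ g (an implementation of the first contract), and m' ≤ a'ᶜ ⊔ g' (an implementation of the second contract), then e ⊓ m ⊓ m' ≤ g ⊓ g': in an environment satisfying both assumptions, the interconnection of correct implementations delivers both guarantees. -/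
theorem stmt_16 {B : Type*} [BooleanAlgebra B] (a g a' g' e m m' : B)
    (he : e ≤ a ⊓ a') (hm : m ≤ aᶜ ⊔ g) (hm' : m' ≤ a'ᶜ ⊔ g') :
    e ⊓ m ⊓ m' ≤ g ⊓ g' := by
  have h1 : e ⊓ m ⊓ m' ≤ g := by
    calc e ⊓ m ⊓ m' ≤ a ⊓ (aᶜ ⊔ g) := by
          exact le_inf (inf_le_left.trans (inf_le_left.trans (he.trans inf_le_left)))
            (inf_le_left.trans (inf_le_right.trans hm))
      _ ≤ g := by
          rw [inf_sup_left, inf_compl_eq_bot]; simp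
  have h2 : e ⊓ m ⊓ m' ≤ g' := by
    calc e ⊓ m ⊓ m' ≤ a' ⊓ (a'ᶜ ⊔ g') := by
          exact le_inf (inf_le_left.trans (inf_le_left.trans (he.trans inf_le_right)))
            (inf_le_right.trans hm')
      _ ≤ g' := by
          rw [inf_sup_left, inf_compl_eq_bot]; simp
  exact le_inf h1 h2
end
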